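/- Let p be an odd prime and r ∈ Z_p^× not a root of unity, and let G_r be the closure of the cyclic group generated by r in Z_p^×. Then the quotient group Z_p^× / G_r is finite, and it is isomorphic to (Z/p^{N_r}Z)^× / G_{r,N_r}, where N_r is the smallest N such that p divides the order of r modulo p^N and G_{r,N_r} is the subgroup of (Z/p^{N_r}Z)^× generated by r. -/

import Mathlib

/-!
Let `t` be the order of `r` modulo `p ^ (Nr - 1)`. Minimality of `Nr` makes `t` prime to `p`, so
`s = r ^ t` is `1` modulo `p ^ (Nr - 1)` but not modulo `p ^ Nr`. Lifting the exponent (`p` odd)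
shows that `s ^ p ^ m - 1` has valuation exactly `Nr - 1 + m`, and successive approximation by
powers of `s ^ p ^ m` then puts every `u ≡ 1 mod p ^ (Nr - 1)` into the closure of `⟨s⟩`. Hence the
closure of `⟨r⟩` is the full preimage of `⟨r mod p ^ Nr⟩`, which is closed because reduction modulo
`p ^ Nr` is locally constant, and reduction is surjective on units.
-/

noncomputable def QuotientGroup.quotientComapMulEquivOfSurjective {G H : Type*} [Group G] [Group H]
    (f : G →* H) (hf : Function.Surjective f) (K : Subgroup H) [K.Normal] :
    G ⧸ K.comap f ≃* H ⧸ K :=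
  (quotientMulEquivOfEq (by rw [← MonoidHom.comap_ker, ker_mk'])).trans
    (quotientKerEquivOfSurjective ((mk' K).comp f) ((mk'_surjective K).comp hf))

namespace PadicInt

variable {p : ℕ} [hp : Fact p.Prime]

theorem norm_le_pow_iff_dvd (x : ℤ_[p]) (n : ℕ) :
    ‖x‖ ≤ (p : ℝ) ^ (-n : ℤ) ↔ (p : ℤ_[p]) ^ n ∣ x := by
  rw [norm_le_pow_iff_mem_span_pow, Ideal.mem_span_singleton]

theorem toZModPow_eq_iff_dvd_sub {n : ℕ} {x y : ℤ_[p]} :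
    toZModPow n x = toZModPow n y ↔ (p : ℤ_[p]) ^ n ∣ x - y := by
  rw [← Ideal.mem_span_singleton, ← ker_toZModPow, RingHom.mem_ker, map_sub, sub_eq_zero]

theorem isLocallyConstant_toZModPow (n : ℕ) :
    IsLocallyConstant (toZModPow n : ℤ_[p] → ZMod (p ^ n)) := by
  refine (IsLocallyConstant.iff_eventually_eq _).2 fun x => ?_
  have hpos : (0 : ℝ) < (p : ℝ) ^ (-n : ℤ) := zpow_pos (by exact_mod_cast hp.out.pos) _
  filter_upwards [Metric.ball_mem_nhds x hpos] with y hy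
  rw [toZModPow_eq_iff_dvd_sub, ← norm_le_pow_iff_dvd]
  exact (mem_ball_iff_norm.1 hy).le

theorem isClosed_preimage_unitsMap_toZModPow (n : ℕ) (s : Set (ZMod (p ^ n))ˣ) :
    IsClosed (Units.map (toZModPow (p := p) n).toMonoidHom ⁻¹' s) := by
  have : IsLocallyConstant (Units.map (toZModPow (p := p) n).toMonoidHom) :=
    .desc _ Units.val ((isLocallyConstant_toZModPow n).comp_continuous Units.continuous_val)
      Units.val_injective
  exact isOpen_compl_iff.1 (this sᶜ)

theorem unitsMap_toZModPow_surjective (n : ℕ) :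
    Function.Surjective (Units.map (toZModPow (p := p) n).toMonoidHom) := by
  rcases n.eq_zero_or_pos with rfl | hn
  · have : Subsingleton (ZMod (p ^ 0)) := ZMod.subsingleton_iff.2 (pow_zero p)
    exact fun v => ⟨1, Subsingleton.elim _ _⟩
  · have : Fact (1 < p ^ n) := ⟨Nat.one_lt_pow hn.ne' hp.out.one_lt⟩
    exact IsLocalRing.surjective_units_map_of_local_ringHom _ (ZMod.ringHom_surjective _)
      (.of_surjective _ (ZMod.ringHom_surjective _))

theorem mem_closure_of_forall_pow_dvd_sub {s : Set ℤ_[p]ˣ} {u : ℤ_[p]ˣ}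
    (h : ∀ m : ℕ, ∃ v ∈ s, (p : ℤ_[p]) ^ m ∣ (u : ℤ_[p]) - v) : u ∈ closure s := by
  rw [Units.isOpenEmbedding_val.isEmbedding.closure_eq_preimage_closure_image, Set.mem_preimage,
    Metric.mem_closure_iff]
  intro ε hε
  obtain ⟨m, hm⟩ := exists_pow_neg_lt p hε
  obtain ⟨v, hv, hdvd⟩ := h m
  refine ⟨v, Set.mem_image_of_mem _ hv, ?_⟩
  rw [dist_eq_norm]
  exact ((norm_le_pow_iff_dvd _ m).2 hdvd).trans_lt hm

theorem exists_pow_dvd_sub_pow {n : ℕ} (hn : 1 ≤ n) {g x : ℤ_[p]}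
    (hg : emultiplicity (p : ℤ_[p]) (g - 1) = n) (hx : (p : ℤ_[p]) ^ n ∣ x - 1) :
    ∃ i : ℕ, (p : ℤ_[p]) ^ (n + 1) ∣ x - g ^ i := by
  obtain ⟨⟨b, hb⟩, hnot⟩ := emultiplicity_eq_coe.1 hg
  obtain ⟨a, ha⟩ := hx
  have hb_unit : IsUnit b := by
    by_contra hb'
    obtain ⟨c, rfl⟩ := (norm_lt_one_iff_dvd b).1 (not_isUnit_iff.1 hb')
    exact hnot ⟨c, by rw [hb]; ring⟩
  obtain ⟨i, -, hi⟩ := exists_mem_range (a * ((hb_unit.unit⁻¹ : ℤ_[p]ˣ) : ℤ_[p]))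
  rw [maximalIdeal_eq_span_p, Ideal.mem_span_singleton] at hi
  refine ⟨i, ?_⟩
  have hlin : (p : ℤ_[p]) ^ (n + 1) ∣ (p : ℤ_[p]) ^ n * (a - i * b) := by
    rw [pow_succ]
    refine mul_dvd_mul_left _ (hi.trans ⟨b, ?_⟩)
    rw [sub_mul, mul_assoc, hb_unit.val_inv_mul, mul_one]
  -- `x - g ^ i = p ^ n * (a - i * b) - (g ^ i - 1 - i * (g - 1))`, and `(g - 1) ^ 2` divides
  -- the last term.
  have hsq : (p : ℤ_[p]) ^ (n + 1) ∣ (g - 1) ^ 2 :=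
    (pow_dvd_pow _ (show n + 1 ≤ 2 * n by omega)).trans ⟨b ^ 2, by rw [hb]; ring⟩
  have hquad := hsq.trans (sq_dvd_add_pow_sub_sub (g - 1) 1 i)
  convert hlin.sub hquad using 1
  linear_combination ha - (i : ℤ_[p]) * hb

theorem exists_zpow_pow_dvd_sub (hodd : Odd p) {n : ℕ} (hn : 1 ≤ n) {s u : ℤ_[p]ˣ}
    (hs : emultiplicity (p : ℤ_[p]) ((s : ℤ_[p]) - 1) = n)
    (hu : (p : ℤ_[p]) ^ n ∣ (u : ℤ_[p]) - 1) (m : ℕ) :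
    ∃ k : ℤ, (p : ℤ_[p]) ^ (n + m) ∣ (u : ℤ_[p]) - ((s ^ k : ℤ_[p]ˣ) : ℤ_[p]) := by
  induction m with
  | zero => exact ⟨0, by simpa using hu⟩
  | succ m ih =>
    obtain ⟨k, hk⟩ := ih
    obtain ⟨w, rfl⟩ : ∃ w, u = w * s ^ k := ⟨u * (s ^ k)⁻¹, by group⟩
    have hw : (p : ℤ_[p]) ^ (n + m) ∣ (w : ℤ_[p]) - 1 := by
      rwa [Units.val_mul, ← sub_one_mul, Units.dvd_mul_right] at hk
    have hg : emultiplicity (p : ℤ_[p]) ((s : ℤ_[p]) ^ p ^ m - 1) = (n + m : ℕ) := by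
      have hs1 : (p : ℤ_[p]) ∣ (s : ℤ_[p]) - 1 :=
        (dvd_pow_self _ (by omega)).trans (pow_dvd_of_le_emultiplicity hs.ge)
      have hps : ¬ (p : ℤ_[p]) ∣ s := fun h => prime_p.not_isUnit (isUnit_of_dvd_unit h s.isUnit)
      have := emultiplicity_pow_prime_pow_sub_pow_prime_pow prime_p hodd hs1 hps m
      rwa [one_pow, hs, ← Nat.cast_add] at this
    obtain ⟨i, hi⟩ := exists_pow_dvd_sub_pow (by omega) hg hw
    refine ⟨k + (p ^ m * i : ℕ), ?_⟩
    rw [zpow_add, zpow_natCast, mul_comm (s ^ k), Units.val_mul, Units.val_mul, ← sub_mul,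
      Units.dvd_mul_right, pow_mul, Units.val_pow_eq_pow_val, Units.val_pow_eq_pow_val]
    exact hi

theorem mem_closure_zpowers_of_pow_dvd_sub_one (hodd : Odd p) {n : ℕ} (hn : 1 ≤ n)
    {s u : ℤ_[p]ˣ} (hs : emultiplicity (p : ℤ_[p]) ((s : ℤ_[p]) - 1) = n)
    (hu : (p : ℤ_[p]) ^ n ∣ (u : ℤ_[p]) - 1) :
    u ∈ (Subgroup.zpowers s).topologicalClosure :=
  mem_closure_of_forall_pow_dvd_sub fun m =>
    let ⟨k, hk⟩ := exists_zpow_pow_dvd_sub hodd hn hs hu m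
    ⟨s ^ k, ⟨k, rfl⟩, (pow_dvd_pow _ (by omega)).trans hk⟩

theorem not_dvd_orderOf_toZModPow_of_le_one {n : ℕ} (hn : n ≤ 1) (r : ℤ_[p]ˣ) :
    ¬ p ∣ orderOf (toZModPow n (r : ℤ_[p])) := by
  have htot : Nat.totient (p ^ n) ∣ p - 1 := by
    interval_cases n <;> simp [Nat.totient_prime hp.out]
  have hord : orderOf (toZModPow n (r : ℤ_[p])) ∣ p - 1 := by
    change orderOf ((Units.map (toZModPow n).toMonoidHom r : (ZMod (p ^ n))ˣ) : ZMod (p ^ n)) ∣ _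
    rw [orderOf_units]
    exact orderOf_dvd_card.trans (by rw [ZMod.card_units_eq_totient]; exact htot)
  intro h
  have := Nat.le_of_dvd (Nat.sub_pos_of_lt hp.out.one_lt) (h.trans hord)
  have := hp.out.pos
  omega

theorem emultiplicity_pow_orderOf_toZModPow_sub_one {n : ℕ} {x : ℤ_[p]}
    (hn : ¬ p ∣ orderOf (toZModPow n x)) (hn1 : p ∣ orderOf (toZModPow (n + 1) x)) :
    emultiplicity (p : ℤ_[p]) (x ^ orderOf (toZModPow n x) - 1) = n := by
  rw [emultiplicity_eq_coe, ← toZModPow_eq_iff_dvd_sub, ← toZModPow_eq_iff_dvd_sub, map_pow,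
    map_pow, map_one, map_one, pow_orderOf_eq_one]
  exact ⟨rfl, fun h => hn (hn1.trans (orderOf_dvd_of_pow_eq_one h))⟩

theorem closure_zpowers_eq_comap_unitsMap_toZModPow (hodd : Odd p) (r : ℤ_[p]ˣ) {n : ℕ}
    (hn : 1 ≤ n) (hnot : ¬ p ∣ orderOf (toZModPow n (r : ℤ_[p])))
    (hdvd : p ∣ orderOf (toZModPow (n + 1) (r : ℤ_[p]))) :
    (Subgroup.zpowers r).topologicalClosure =
      (Subgroup.zpowers (Units.map (toZModPow (n + 1)).toMonoidHom r)).comap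
        (Units.map (toZModPow (n + 1)).toMonoidHom) := by
  refine le_antisymm (Subgroup.topologicalClosure_minimal _ ?_ ?_) ?_
  · rw [Subgroup.zpowers_le]
    exact Subgroup.mem_zpowers _
  · rw [Subgroup.coe_comap]
    exact isClosed_preimage_unitsMap_toZModPow _ _
  rintro u ⟨k, hk⟩
  set t := orderOf (toZModPow n (r : ℤ_[p]))
  have hs : emultiplicity (p : ℤ_[p]) (((r ^ t : ℤ_[p]ˣ) : ℤ_[p]) - 1) = n := by
    rw [Units.val_pow_eq_pow_val]
    exact emultiplicity_pow_orderOf_toZModPow_sub_one hnot hdvd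
  have hker : Units.map (toZModPow (n + 1)).toMonoidHom (u * (r ^ k)⁻¹) = 1 := by
    rw [map_mul, map_inv, map_zpow, ← hk, mul_inv_cancel]
  have hu : (p : ℤ_[p]) ^ n ∣ ((u * (r ^ k)⁻¹ : ℤ_[p]ˣ) : ℤ_[p]) - 1 :=
    (pow_dvd_pow _ n.le_succ).trans
      (toZModPow_eq_iff_dvd_sub.1 ((Units.ext_iff.1 hker).trans (map_one _).symm))
  have hle : (Subgroup.zpowers (r ^ t)).topologicalClosure ≤
      (Subgroup.zpowers r).topologicalClosure :=
    Subgroup.topologicalClosure_mono (Subgroup.zpowers_le.2 (Subgroup.npow_mem_zpowers r t))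
  simpa using mul_mem (hle (mem_closure_zpowers_of_pow_dvd_sub_one hodd hn hs hu))
    (Subgroup.le_topologicalClosure _ ⟨k, rfl⟩)

end PadicInt

theorem quotient_by_closure_finite_and_iso_general (p : ℕ) [Fact p.Prime] (hp : Odd p) (r : ℤ_[p]ˣ)
    (Nr : ℕ)
    (hNrdvd : p ∣ orderOf (PadicInt.toZModPow Nr (r : ℤ_[p])))
    (hNrmin : ∀ M : ℕ, 1 ≤ M → p ∣ orderOf (PadicInt.toZModPow M (r : ℤ_[p])) → Nr ≤ M) :
    Finite (ℤ_[p]ˣ ⧸ (Subgroup.zpowers r).topologicalClosure) ∧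
      Nonempty ((ℤ_[p]ˣ ⧸ (Subgroup.zpowers r).topologicalClosure) ≃*
        ((ZMod (p ^ Nr))ˣ ⧸
          Subgroup.zpowers (Units.map (PadicInt.toZModPow Nr).toMonoidHom r))) := by
  have hNr : 2 ≤ Nr := by
    by_contra h
    exact PadicInt.not_dvd_orderOf_toZModPow_of_le_one (by omega) r hNrdvd
  obtain ⟨n, rfl⟩ : ∃ n, Nr = n + 1 := ⟨Nr - 1, by omega⟩
  have hnot : ¬ p ∣ orderOf (PadicInt.toZModPow n (r : ℤ_[p])) := fun h => by
    have := hNrmin n (by omega) h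
    omega
  let e := (QuotientGroup.quotientMulEquivOfEq
      (PadicInt.closure_zpowers_eq_comap_unitsMap_toZModPow hp r (by omega) hnot hNrdvd)).trans
    (QuotientGroup.quotientComapMulEquivOfSurjective _ (PadicInt.unitsMap_toZModPow_surjective _) _)
  exact ⟨.of_equiv _ e.symm.toEquiv, ⟨e⟩⟩

theorem quotient_by_closure_finite_and_iso (p : ℕ) [Fact p.Prime] (hp : Odd p) (r : ℤ_[p]ˣ)
    (hroot : ∀ n : ℕ, 0 < n → r ^ n ≠ 1) (Nr : ℕ) (hNr1 : 1 ≤ Nr)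
    (hNrdvd : p ∣ orderOf (PadicInt.toZModPow Nr (r : ℤ_[p])))
    (hNrmin : ∀ M : ℕ, 1 ≤ M → p ∣ orderOf (PadicInt.toZModPow M (r : ℤ_[p])) → Nr ≤ M) :
    Finite (ℤ_[p]ˣ ⧸ (Subgroup.zpowers r).topologicalClosure) ∧
      Nonempty ((ℤ_[p]ˣ ⧸ (Subgroup.zpowers r).topologicalClosure) ≃*
        ((ZMod (p ^ Nr))ˣ ⧸
          Subgroup.zpowers (Units.map (PadicInt.toZModPow Nr).toMonoidHom r))) :=
  quotient_by_closure_finite_and_iso_general p hp r Nr hNrdvd hNrmin
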